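/- Let R be a commutative unital ring and I an ideal of R such that every R-module is I-reduced. Then for every R-module M, the quotient module M/(0 :_M I) is I-torsionfree; that is, (0 :_{M/(0 :_M I)} I) = 0, and hence Γ_I(M/Γ_I(M)) = 0, where Γ_I(N) = {n ∈ N : I^k n = 0 for some k ≥ 1}. -/

import Mathlib

/-!
Write `T(J) = (0 :_M J)`. Since `m ∈ T(J * I)` exactly when `I m ⊆ T(J)`, reducedness
`T(I²) ≤ T(I)` propagates by induction to `T(I^(k+1)) = T(I)` for all `k`, so `Γ_I(M) = T(I)`.
If the class of `m` in `M / T(I)` is killed by `I`, then `I m ⊆ T(I)`, i.e. `m ∈ T(I²) = T(I)`,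
so the class is zero.
-/

universe u

/-- The `I`-torsion submodule `Γ_I(M) = {m ∈ M : I^k m = 0 for some k ≥ 1}`, realized as the
(directed) supremum of the submodules of elements annihilated by `I^k`, `k ≥ 1`. -/
noncomputable def torsionGamma (R : Type u) [CommRing R] (I : Ideal R) (M : Type u)
    [AddCommGroup M] [Module R M] : Submodule R M :=
  ⨆ k : ℕ, Submodule.torsionBySet R M ((I ^ (k + 1) : Ideal R) : Set R)

namespace Submodule

variable {R M : Type*} [CommRing R] [AddCommGroup M] [Module R M] {I J : Ideal R}

theorem mem_torsionBySet_ideal_iff_le_torsionOf {m : M} :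
    m ∈ torsionBySet R M I ↔ I ≤ Ideal.torsionOf R M m := by
  simp [SetLike.le_def, Ideal.mem_torsionOf_iff]

theorem mem_torsionBySet_mul_iff {m : M} :
    m ∈ torsionBySet R M ↑(I * J) ↔ ∀ r ∈ J, r • m ∈ torsionBySet R M I := by
  rw [mem_torsionBySet_ideal_iff_le_torsionOf, Ideal.mul_le]
  simp only [mem_torsionBySet_ideal_iff_le_torsionOf, SetLike.le_def, Ideal.mem_torsionOf_iff,
    mul_smul]
  exact forall₂_comm

theorem torsionBySet_pow_succ_eq_of_sq_le (h : torsionBySet R M ↑(I ^ 2) ≤ torsionBySet R M I)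
    (k : ℕ) : torsionBySet R M ↑(I ^ (k + 1)) = torsionBySet R M I := by
  induction k with
  | zero => rw [zero_add, pow_one]
  | succ k ih =>
    refine le_antisymm (fun m hm => h ?_) ?_
    · rw [pow_succ, mem_torsionBySet_mul_iff, ih] at hm
      rwa [pow_two, mem_torsionBySet_mul_iff]
    · simpa using torsionBySet_le_torsionBySet_pow (M := M) 1 (k + 2) (by omega) I

theorem torsionBySet_quotient_torsionBySet_eq_bot
    (h : torsionBySet R M ↑(I ^ 2) ≤ torsionBySet R M I) :
    torsionBySet R (M ⧸ torsionBySet R M I) I = ⊥ := by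
  refine eq_bot_iff.2 fun x hx => ?_
  induction x using Quotient.induction_on with
  | H m =>
    rw [mem_bot, Quotient.mk_eq_zero]
    refine h ((pow_two I).symm ▸ mem_torsionBySet_mul_iff.2 fun r hr => ?_)
    rw [← Quotient.mk_eq_zero, Quotient.mk_smul]
    exact (mem_torsionBySet_iff _ _).1 hx ⟨r, hr⟩

end Submodule

open Submodule

theorem torsionGamma_eq_torsionBySet {R M : Type u} [CommRing R] [AddCommGroup M] [Module R M]
    {I : Ideal R} (h : torsionBySet R M ↑(I ^ 2) ≤ torsionBySet R M I) :
    torsionGamma R I M = torsionBySet R M I := by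
  simp only [torsionGamma, torsionBySet_pow_succ_eq_of_sq_le h, ciSup_const]

theorem stmt2 (R : Type u) [CommRing R] (I : Ideal R)
    (hred : ∀ (N : Type u) [AddCommGroup N] [Module R N],
      ∀ m : N, (∀ r ∈ I ^ 2, r • m = 0) → ∀ r ∈ I, r • m = 0) :
    ∀ (M : Type u) [AddCommGroup M] [Module R M],
      Submodule.torsionBySet R (M ⧸ Submodule.torsionBySet R M (I : Set R)) (I : Set R) = ⊥ ∧
      torsionGamma R I (M ⧸ torsionGamma R I M) = ⊥ := by
  have reduced : ∀ (N : Type u) [AddCommGroup N] [Module R N],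
      torsionBySet R N ↑(I ^ 2) ≤ torsionBySet R N I := fun N _ _ m hm => by
    simpa using hred N m (by simpa using hm)
  intro M _ _
  refine ⟨torsionBySet_quotient_torsionBySet_eq_bot (reduced M), ?_⟩
  rw [torsionGamma_eq_torsionBySet (reduced M), torsionGamma_eq_torsionBySet (reduced _)]
  exact torsionBySet_quotient_torsionBySet_eq_bot (reduced M)
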